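/- The block matrix B = [[0, I], [-F̄₁, -F̄₂]] with F̄₁ = M₀⁻¹K₀ and F̄₂ = -M₀⁻¹(J̄₀ - R̄₀), where M₀, K₀ are symmetric positive definite, J̄₀ is skew-symmetric, and R̄₀ is symmetric positive definite, is Hurwitz: every eigenvalue of B has strictly negative real part. -/

import Mathlib

/-!
If `(x, y)` is an eigenvector of `B` for `μ`, then `y = μ x` and `x ≠ 0` solves the quadratic
pencil `(μ² M₀ + μ (R₀ - J₀) + K₀) x = 0`. Pairing with `x*` gives `m μ² + (r - j) μ + k = 0`
with `m, k, r > 0` and `j` purely imaginary. The real part of `conj μ` times this identity is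
`Re μ · (m |μ|² + k) = -r |μ|²`, hence `Re μ < 0`.
-/

open Matrix ComplexOrder ComplexConjugate

namespace Matrix

variable {ι : Type*} [Fintype ι]

lemma re_star_dotProduct_map_ofReal_mulVec (A : Matrix ι ι ℝ) (x : ι → ℂ) :
    (star x ⬝ᵥ A.map Complex.ofReal *ᵥ x).re =
      (fun i => (x i).re) ⬝ᵥ A *ᵥ (fun i => (x i).re) +
        (fun i => (x i).im) ⬝ᵥ A *ᵥ (fun i => (x i).im) := by
  simp only [dotProduct, mulVec, map_apply, Pi.star_apply, Finset.mul_sum, Complex.re_sum,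
    ← Finset.sum_add_distrib]
  refine Finset.sum_congr rfl fun i _ => Finset.sum_congr rfl fun j _ => ?_
  simp only [Complex.mul_re, Complex.star_def, Complex.conj_re, Complex.conj_im,
    Complex.ofReal_re, Complex.ofReal_im, Complex.mul_im]
  ring

lemma map_ofReal_mul {κ : Type*} (A : Matrix κ ι ℝ) (B : Matrix ι κ ℝ) :
    (A * B).map Complex.ofReal = A.map Complex.ofReal * B.map Complex.ofReal :=
  Matrix.map_mul (f := Complex.ofRealHom)

lemma PosDef.map_ofReal {A : Matrix ι ι ℝ} (hA : A.PosDef) : (A.map Complex.ofReal).PosDef := by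
  have hH : (A.map Complex.ofReal).IsHermitian :=
    hA.isHermitian.map _ fun _ => by simp
  refine .of_dotProduct_mulVec_pos hH fun x hx => Complex.pos_iff.2 ⟨?_, ?_⟩
  · rw [re_star_dotProduct_map_ofReal_mulVec]
    have hreim : (fun i => (x i).re) ≠ 0 ∨ (fun i => (x i).im) ≠ 0 := by
      by_contra! h
      exact hx (funext fun i => Complex.ext (congrFun h.1 i) (congrFun h.2 i))
    rcases hreim with h | h
    · exact add_pos_of_pos_of_nonneg (by simpa using hA.dotProduct_mulVec_pos h)
        (by simpa using hA.posSemidef.dotProduct_mulVec_nonneg _)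
    · exact add_pos_of_nonneg_of_pos (by simpa using hA.posSemidef.dotProduct_mulVec_nonneg _)
        (by simpa using hA.dotProduct_mulVec_pos h)
  · simpa using (hH.im_star_dotProduct_mulVec_self x).symm

lemma dotProduct_mulVec_self_eq_zero_of_transpose_eq_neg {J : Matrix ι ι ℝ} (hJ : Jᵀ = -J)
    (u : ι → ℝ) : u ⬝ᵥ J *ᵥ u = 0 := by
  have h : u ⬝ᵥ J *ᵥ u = -(u ⬝ᵥ J *ᵥ u) := by
    conv_lhs => rw [dotProduct_mulVec, ← mulVec_transpose, hJ, dotProduct_comm]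
    rw [neg_mulVec, dotProduct_neg]
  linarith

lemma re_star_dotProduct_map_ofReal_mulVec_eq_zero_of_transpose_eq_neg {J : Matrix ι ι ℝ}
    (hJ : Jᵀ = -J) (x : ι → ℂ) : (star x ⬝ᵥ J.map Complex.ofReal *ᵥ x).re = 0 := by
  simp only [re_star_dotProduct_map_ofReal_mulVec,
    dotProduct_mulVec_self_eq_zero_of_transpose_eq_neg hJ, add_zero]

lemma exists_mulVec_eq_smul_of_mem_spectrum [DecidableEq ι] {K : Type*} [Field K]
    {A : Matrix ι ι K} {μ : K} (h : μ ∈ spectrum K A) : ∃ v ≠ 0, A *ᵥ v = μ • v := by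
  rw [← spectrum_toLin', ← Module.End.hasEigenvalue_iff_mem_spectrum] at h
  obtain ⟨v, hv⟩ := h.exists_hasEigenvector
  exact ⟨v, hv.2, by simpa using Module.End.mem_eigenspace_iff.1 hv.1⟩

lemma fromBlocks_zero_one_mulVec_elim_eq_smul [DecidableEq ι] {R : Type*} [CommRing R]
    {C D : Matrix ι ι R} {x y : ι → R} {μ : R}
    (h : fromBlocks 0 1 C D *ᵥ Sum.elim x y = μ • Sum.elim x y) :
    y = μ • x ∧ C *ᵥ x + μ • D *ᵥ x = μ ^ 2 • x := by
  have hy : y = μ • x := funext fun i => by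
    simpa [fromBlocks_mulVec] using congrFun h (.inl i)
  subst hy
  have hx : C *ᵥ x + D *ᵥ (μ • x) = μ • μ • x := funext fun i => by
    simpa [fromBlocks_mulVec] using congrFun h (.inr i)
  rw [mulVec_smul, smul_smul, ← sq] at hx
  exact ⟨rfl, hx⟩

end Matrix

theorem Complex.re_neg_of_quadratic_eq_zero {m k r j μ : ℂ} (hm : 0 < m) (hk : 0 < k)
    (hr : 0 < r) (hj : j.re = 0) (h : m * μ ^ 2 + (r - j) * μ + k = 0) : μ.re < 0 := by
  rw [pos_iff] at hm hk hr
  have hμ : μ ≠ 0 := by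
    rintro rfl
    exact hk.1.ne' (by simpa using congrArg re h)
  have hs : 0 < normSq μ := normSq_pos.2 hμ
  have key : μ.re * (m.re * normSq μ + k.re) = -(r.re * normSq μ) := by
    have := congrArg (fun z => (conj μ * z).re) h
    simp only [mul_re, mul_im, add_re, add_im, sub_re, sub_im, conj_re, conj_im, sq, ← hm.2,
      ← hk.2, ← hr.2, hj, zero_re, zero_im] at this
    rw [normSq_apply]
    linear_combination this
  nlinarith [mul_pos hr.1 hs, mul_pos hm.1 hs]

/-- The block matrix B = [[0, I], [-M₀⁻¹K₀, M₀⁻¹(J̄₀-R̄₀)]] with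
M₀, K₀ symmetric positive definite, J̄₀ skew-symmetric, R̄₀ symmetric positive
definite, is Hurwitz. -/
theorem stmt2 {n : ℕ} (M₀ K₀ J₀ R₀ : Matrix (Fin n) (Fin n) ℝ)
    (hM : M₀.PosDef) (hK : K₀.PosDef) (hJ : J₀ᵀ = -J₀) (hR : R₀.PosDef)
    (B : Matrix (Fin n ⊕ Fin n) (Fin n ⊕ Fin n) ℝ)
    (hB : B = Matrix.fromBlocks 0 1 (-(M₀⁻¹ * K₀)) (M₀⁻¹ * (J₀ - R₀))) :
    ∀ μ ∈ spectrum ℂ (B.map Complex.ofReal), μ.re < 0 := by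
  intro μ hμ
  obtain ⟨v, hv0, hv⟩ := exists_mulVec_eq_smul_of_mem_spectrum hμ
  rw [← Sum.elim_comp_inl_inr v] at hv hv0
  set x := v ∘ Sum.inl
  rw [hB, fromBlocks_map, Matrix.map_zero _ Complex.ofReal_zero,
    Matrix.map_one _ Complex.ofReal_zero Complex.ofReal_one] at hv
  obtain ⟨hy, hx⟩ := fromBlocks_zero_one_mulVec_elim_eq_smul hv
  have hx0 : x ≠ 0 := by
    rintro hx0
    simp [hy, hx0] at hv0
  have hdet : IsUnit M₀.det := hM.det_pos.ne'.isUnit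
  have hpencil : μ ^ 2 • (M₀.map Complex.ofReal *ᵥ x) = -(K₀.map Complex.ofReal *ᵥ x) +
      μ • (J₀.map Complex.ofReal *ᵥ x - R₀.map Complex.ofReal *ᵥ x) := by
    have h := congrArg (M₀.map Complex.ofReal *ᵥ ·) hx
    simp only [mulVec_add, mulVec_smul, mulVec_mulVec, ← map_ofReal_mul, mul_neg,
      mul_nonsing_inv_cancel_left _ _ hdet] at h
    rw [← h, Matrix.map_neg _ Complex.ofReal_neg, Matrix.map_sub _ Complex.ofReal_sub,
      neg_mulVec, sub_mulVec]
  have hq := congrArg (star x ⬝ᵥ ·) hpencil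
  simp only [dotProduct_add, dotProduct_smul, dotProduct_sub, dotProduct_neg, smul_eq_mul] at hq
  exact Complex.re_neg_of_quadratic_eq_zero (hM.map_ofReal.dotProduct_mulVec_pos hx0)
    (hK.map_ofReal.dotProduct_mulVec_pos hx0) (hR.map_ofReal.dotProduct_mulVec_pos hx0)
    (re_star_dotProduct_map_ofReal_mulVec_eq_zero_of_transpose_eq_neg hJ x)
    (by linear_combination hq)
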